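/- Let Ω_1,…,Ω_r ∈ Mat_n(ℂ[[q^1,…,q^r]]) (independent of ħ) be flat, set p_a := Ω_a|_{q=0}, and let B be a symmetric bilinear form on ℂ^n with B(p_a v, w) = B(v, p_a w) for all a and all v, w. Let S ∈ Mat_n(ℂ[[ħ^{-1}]][[q]]) be the unique matrix with S|_{q=0} = Id and ħθ_a S + Ω_a S − S p_a = 0 for all a, and let S̄ ∈ Mat_n(ℂ[[ħ^{-1}]][[q]]) be obtained from S by replacing ħ by −ħ. Then the following are equivalent: (1) B(Ω_a v, w) = B(v, Ω_a w) for all a and all v, w ∈ ℂ^n, as identities in ℂ[[q]]; (3) B(S̄ v, S w) = B(v, w) for all v, w ∈ ℂ^n, as identities in ℂ[[ħ^{-1}]][[q]], where B is extended bilinearly over ℂ[[ħ^{-1}]][[q]]. -/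

import Mathlib

/-!
Work over ℂ.  We represent the coefficient ring `ℂ[ħ,ħ⁻¹]]` (formal Laurent
series `Σ_{k ≤ K} c_k ħ^k` with finitely many positive powers of `ħ`) as
`LaurentSeries ℂ` in the variable `t = ħ⁻¹`; thus the coefficient of `t^k`
is the coefficient of `ħ^{-k}`.  `AA r = ℂ[ħ,ħ⁻¹]][[q¹,…,qʳ]]`, and
`θ_a = qᵃ·∂/∂qᵃ` is the logarithmic partial derivative.
-/

noncomputable section

/-- `ℂ[ħ,ħ⁻¹]]`, realized as Laurent series in `t = ħ⁻¹`. -/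
abbrev LS := LaurentSeries ℂ

/-- `ħ = t⁻¹` where `t` is the `LaurentSeries` variable. -/
def hbarL : LS := HahnSeries.single (-1 : ℤ) (1 : ℂ)

/-- `ℂ[ħ,ħ⁻¹]][[q¹,…,qʳ]]`. -/
abbrev AA (r : ℕ) := MvPowerSeries (Fin r) LS

/-- The logarithmic derivative `θ_a = qᵃ ∂/∂qᵃ`:
on the monomial `q^d` it acts by multiplication by `d a`. -/
def thetaA {r : ℕ} (a : Fin r) (x : AA r) : AA r := fun d => (d a : LS) * x d

/-- `θ_a` acting entrywise on matrices. -/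
def thetaMat {r n : ℕ} (a : Fin r) (M : Matrix (Fin n) (Fin n) (AA r)) :
    Matrix (Fin n) (Fin n) (AA r) :=
  Matrix.of fun i j => thetaA a (M i j)

/-- `ħ` as an element of `ℂ[ħ,ħ⁻¹]][[q]]`. -/
def hbarA (r : ℕ) : AA r := MvPowerSeries.C (σ := Fin r) (R := LS) hbarL

/-- The constant term at `q = 0`. -/
def ccA {r : ℕ} : AA r →+* LS := MvPowerSeries.constantCoeff (σ := Fin r) (R := LS)

/-- The embedding `ℂ → ℂ[ħ,ħ⁻¹]][[q]]`. -/
def cA (r : ℕ) : ℂ →+* AA r := (MvPowerSeries.C (σ := Fin r) (R := LS)).comp HahnSeries.C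

/-- `x ∈ ℂ[ħ]`: `x` is a polynomial in `ħ` (no negative powers of `ħ`,
i.e. no positive powers of `t`; finiteness is automatic for Laurent series). -/
def isPolyH (x : LS) : Prop := ∀ k : ℤ, 0 < k → x.coeff k = 0

/-- `x ∈ ℂ[[ħ⁻¹]]`: `x` is regular at `ħ = ∞` (no positive powers of `ħ`). -/
def isRegH (x : LS) : Prop := ∀ k : ℤ, k < 0 → x.coeff k = 0

/-- `x ∈ ℂ`: `x` is a constant, independent of `ħ`. -/
def isConstH (x : LS) : Prop := ∀ k : ℤ, k ≠ 0 → x.coeff k = 0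

/-- A matrix over `ℂ[ħ,ħ⁻¹]][[q]]` has entries in `ℂ[ħ][[q]]`. -/
def MatPolyH {r n : ℕ} (M : Matrix (Fin n) (Fin n) (AA r)) : Prop :=
  ∀ i j d, isPolyH (M i j d)

/-- A matrix over `ℂ[ħ,ħ⁻¹]][[q]]` has entries in `ℂ[[ħ⁻¹]][[q]]`. -/
def MatRegH {r n : ℕ} (M : Matrix (Fin n) (Fin n) (AA r)) : Prop :=
  ∀ i j d, isRegH (M i j d)

/-- A matrix over `ℂ[ħ,ħ⁻¹]][[q]]` has entries in `ℂ[[q]]`,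
i.e. is independent of `ħ`. -/
def MatConstH {r n : ℕ} (M : Matrix (Fin n) (Fin n) (AA r)) : Prop :=
  ∀ i j d, isConstH (M i j d)

/-- Flatness: `ħ(θ_aΩ_b − θ_bΩ_a) + Ω_aΩ_b − Ω_bΩ_a = 0` for all `a, b`. -/
def IsFlat {r n : ℕ} (Ω : Fin r → Matrix (Fin n) (Fin n) (AA r)) : Prop :=
  ∀ a b, hbarA r • (thetaMat a (Ω b) - thetaMat b (Ω a)) + (Ω a * Ω b - Ω b * Ω a) = 0

/-- Diagonal rescaling of a Laurent series: the coefficient of `ħ^{-k}`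
is multiplied by `f k`. -/
def scaleL (f : ℤ → ℂ) (x : LS) : LS :=
  ⟨fun k => f k * x.coeff k,
   x.isPWO_support'.mono (fun k hk => by
     simp only [Function.mem_support, ne_eq] at hk ⊢
     exact fun h => hk (by rw [h, mul_zero]))⟩

/-- The substitution `ħ ↦ −ħ` on `ℂ[ħ,ħ⁻¹]]`. -/
def barL (x : LS) : LS := scaleL (fun k => (-1 : ℂ) ^ k) x

/-- The substitution `ħ ↦ −ħ` on matrices over `ℂ[ħ,ħ⁻¹]][[q]]`. -/
def barMat {r n : ℕ} (M : Matrix (Fin n) (Fin n) (AA r)) :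
    Matrix (Fin n) (Fin n) (AA r) :=
  Matrix.of fun i j => (fun d => barL (M i j d) : AA r)


/-!
Put `P := S̄ᵀ B S`. The flat-section equation of `S`, and that of `S̄` (the same equation with
`ħ` replaced by `-ħ`, which fixes `Ω_a` and `p_a`), give
`ħ θ_a P = S̄ᵀ (Ω_aᵀ B - B Ω_a) S + (P p_a - p_aᵀ P)`.
If every `Ω_a` is `B`-self-adjoint, `Q := P - B` solves `ħ θ_a Q = Q p_a - p_aᵀ Q`. Its
coefficient `Q_d` of `q^d` then satisfies `ħ d_a Q_d = Q_d p_a - p_aᵀ Q_d`, and since `Q_d` has no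
positive powers of `ħ`, comparing powers of `ħ⁻¹` kills it for `d ≠ 0`; also `Q_0 = 0` because
`S|_{q=0} = 1`. Conversely, if `P = B` the equation leaves `S̄ᵀ (Ω_aᵀ B - B Ω_a) S = 0`, and `S`,
`S̄` are invertible since their constant terms are.
-/

open Matrix

section Generalities

lemma MvPowerSeries.mem_range_map_subtype_iff {σ A : Type*} [CommRing A] (R : Subring A)
    (x : MvPowerSeries σ A) :
    x ∈ (MvPowerSeries.map R.subtype).range ↔ ∀ d, MvPowerSeries.coeff d x ∈ R :=
  ⟨by rintro ⟨y, rfl⟩ d; simp, fun h => ⟨fun d => ⟨_, h d⟩, rfl⟩⟩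

lemma MvPowerSeries.isUnit_of_isUnit_map_constantCoeff {σ R : Type*} [CommRing R] {n : Type*}
    [Fintype n] [DecidableEq n] {M : Matrix n n (MvPowerSeries σ R)}
    (hM : IsUnit (M.map constantCoeff)) : IsUnit M := by
  rw [isUnit_iff_isUnit_det, isUnit_iff_constantCoeff, RingHom.map_det]
  exact (isUnit_iff_isUnit_det _).1 hM

variable {R : Type*} [CommRing R] {l m n : Type*} [Fintype m]

lemma HahnSeries.map_coeff_mul_map_C {Γ : Type*} [AddCommMonoid Γ] [PartialOrder Γ]
    [IsOrderedCancelAddMonoid Γ] (X : Matrix l m (HahnSeries Γ R)) (A : Matrix m n R) (k : Γ) :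
    (X * (A.map C : Matrix m n (HahnSeries Γ R))).map (coeff · k) = X.map (coeff · k) * A := by
  refine Matrix.ext fun i j => ?_
  simp [mul_apply, coeff_sum, coeff_mul_single_zero]

lemma HahnSeries.map_coeff_map_C_mul {Γ : Type*} [AddCommMonoid Γ] [PartialOrder Γ]
    [IsOrderedCancelAddMonoid Γ] (A : Matrix l m R) (X : Matrix m n (HahnSeries Γ R)) (k : Γ) :
    ((A.map C : Matrix l m (HahnSeries Γ R)) * X).map (coeff · k) = A * X.map (coeff · k) := by
  refine Matrix.ext fun i j => ?_
  simp [mul_apply, coeff_sum]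

lemma MvPowerSeries.map_coeff_mul_map_C {σ : Type*} (X : Matrix l m (MvPowerSeries σ R))
    (A : Matrix m n R) (d : σ →₀ ℕ) :
    (X * (A.map C : Matrix m n (MvPowerSeries σ R))).map (coeff d) = X.map (coeff d) * A := by
  refine Matrix.ext fun i j => ?_
  simp [mul_apply, coeff_mul_C]

lemma MvPowerSeries.map_coeff_map_C_mul {σ : Type*} (A : Matrix l m R)
    (X : Matrix m n (MvPowerSeries σ R)) (d : σ →₀ ℕ) :
    ((A.map C : Matrix l m (MvPowerSeries σ R)) * X).map (coeff d) = A * X.map (coeff d) := by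
  refine Matrix.ext fun i j => ?_
  simp [mul_apply, coeff_C_mul]

end Generalities

section Derivation

variable {R A : Type*} [CommRing R] [CommRing A] [Algebra R A] {n : Type*} [Fintype n]

lemma Derivation.map_matrix_mul (D : Derivation R A A) (M N : Matrix n n A) :
    (M * N).map D = M.map D * N + M * N.map D := by
  refine Matrix.ext fun i j => ?_
  simp only [Matrix.map_apply, Matrix.add_apply, Matrix.mul_apply, map_sum, Derivation.leibniz,
    smul_eq_mul, ← Finset.sum_add_distrib]
  exact Finset.sum_congr rfl fun k _ => by ring

lemma Derivation.map_transpose_mul_mul (D : Derivation R A A) {Ω P S T B : Matrix n n A}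
    (hB : B.map D = 0) (hS : S.map D = S * P - Ω * S) (hT : T.map D = Ω * T - T * P) :
    (Tᵀ * B * S).map D = Tᵀ * (Ωᵀ * B - B * Ω) * S + (Tᵀ * B * S * P - Pᵀ * (Tᵀ * B * S)) := by
  rw [D.map_matrix_mul, D.map_matrix_mul, transpose_map, hB, hS, hT]
  simp only [transpose_sub, transpose_mul, Matrix.mul_sub, Matrix.sub_mul, Matrix.mul_assoc,
    Matrix.mul_zero, add_zero]
  abel

lemma Derivation.map_transpose_mul_mul_sub (D : Derivation R A A) {Ω P S T B : Matrix n n A}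
    (hB : B.map D = 0) (hS : S.map D = S * P - Ω * S) (hT : T.map D = Ω * T - T * P)
    (hΩ : Ωᵀ * B = B * Ω) (hP : Pᵀ * B = B * P) :
    (Tᵀ * B * S - B).map D = (Tᵀ * B * S - B) * P - Pᵀ * (Tᵀ * B * S - B) := by
  rw [Matrix.map_sub _ (map_sub D), hB, sub_zero, D.map_transpose_mul_mul hB hS hT, hΩ, sub_self,
    Matrix.mul_zero, Matrix.zero_mul, zero_add, Matrix.sub_mul, Matrix.mul_sub, hP]
  abel

lemma Derivation.transpose_mul_eq_mul_of_transpose_mul_mul_eq [DecidableEq n]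
    (D : Derivation R A A) {Ω P S T B : Matrix n n A} (hB : B.map D = 0)
    (hS : S.map D = S * P - Ω * S) (hT : T.map D = Ω * T - T * P) (hP : Pᵀ * B = B * P)
    (hSu : IsUnit S) (hTu : IsUnit T) (h : Tᵀ * B * S = B) : Ωᵀ * B = B * Ω := by
  have hD := D.map_transpose_mul_mul hB hS hT
  rw [h, hB, hP, sub_self, add_zero] at hD
  exact sub_eq_zero.1 <|
    ((isUnit_transpose T).2 hTu).mul_right_eq_zero.1 (hSu.mul_left_eq_zero.1 hD.symm)

end Derivation

section Pairing

variable {K R : Type*} [CommRing K] [CommRing R]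

lemma RingHom.apply_single_one {n : Type*} [DecidableEq n] (f : K →+* R) (k : n) :
    (fun x => f (Pi.single (M := fun _ => K) k 1 x)) = Pi.single k 1 :=
  funext fun x => by rw [Pi.apply_single (fun _ => f) (fun _ => map_zero f), map_one]

variable {l m n : Type*} [Fintype l] [Fintype m] [Fintype n]

lemma Matrix.mulVec_dotProduct_mulVec (M : Matrix m n R) (N : Matrix m l R) (v : n → R)
    (w : l → R) : M *ᵥ v ⬝ᵥ N *ᵥ w = v ⬝ᵥ (Mᵀ * N) *ᵥ w := by
  rw [← mulVec_mulVec, dotProduct_mulVec v Mᵀ, vecMul_transpose]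

lemma Matrix.eq_iff_forall_dotProduct_mulVec_map [DecidableEq m] [DecidableEq n] (f : K →+* R)
    {M N : Matrix m n R} :
    M = N ↔ ∀ (v : m → K) (w : n → K),
      (fun i => f (v i)) ⬝ᵥ M *ᵥ (fun i => f (w i)) =
        (fun i => f (v i)) ⬝ᵥ N *ᵥ (fun i => f (w i)) := by
  refine ⟨fun h _ _ => h ▸ rfl, fun h => Matrix.ext fun i j => ?_⟩
  have hij := h (Pi.single i 1) (Pi.single j 1)
  rwa [RingHom.apply_single_one, RingHom.apply_single_one, mulVec_single_one, mulVec_single_one,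
    single_one_dotProduct, single_one_dotProduct] at hij

variable [DecidableEq n]

lemma Matrix.forall_mulVec_dotProduct_map_iff (f : K →+* R) (M B : Matrix n n R) :
    (∀ v w : n → K,
      M *ᵥ (fun i => f (v i)) ⬝ᵥ B *ᵥ (fun i => f (w i)) =
        (fun i => f (v i)) ⬝ᵥ B *ᵥ M *ᵥ (fun i => f (w i))) ↔ Mᵀ * B = B * M := by
  simp only [mulVec_dotProduct_mulVec, mulVec_mulVec, eq_iff_forall_dotProduct_mulVec_map f]

lemma Matrix.forall_mulVec_dotProduct_mulVec_map_iff (f : K →+* R) (T S : Matrix n n R)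
    (B : Matrix n n K) :
    (∀ v w : n → K,
      T *ᵥ (fun i => f (v i)) ⬝ᵥ B.map f *ᵥ S *ᵥ (fun i => f (w i)) = f (v ⬝ᵥ B *ᵥ w)) ↔
      Tᵀ * B.map f * S = B.map f := by
  have hB : ∀ v w : n → K, f (v ⬝ᵥ B *ᵥ w) =
      (fun i => f (v i)) ⬝ᵥ B.map f *ᵥ (fun i => f (w i)) := fun v w => by
    rw [RingHom.map_dotProduct]
    congr 1
    exact funext fun i => RingHom.map_mulVec f B w i
  simp only [hB, mulVec_mulVec, mulVec_dotProduct_mulVec, ← Matrix.mul_assoc,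
    eq_iff_forall_dotProduct_mulVec_map f]

end Pairing

section Laurent

open HahnSeries

lemma scaleL_coeff (f : ℤ → ℂ) (x : LS) (k : ℤ) : (scaleL f x).coeff k = f k * x.coeff k := rfl

lemma support_scaleL_subset (f : ℤ → ℂ) (x : LS) : (scaleL f x).support ⊆ x.support :=
  fun k hk hx => hk (by rw [scaleL_coeff, hx, mul_zero])

lemma scaleL_mul {f : ℤ → ℂ} (hf : ∀ i j, f (i + j) = f i * f j) (x y : LS) :
    scaleL f (x * y) = scaleL f x * scaleL f y := by
  ext k
  rw [scaleL_coeff, coeff_mul, coeff_mul_left' x.isPWO_support (support_scaleL_subset f x),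
    Finset.mul_sum]
  symm
  refine Finset.sum_subset (Finset.antidiagonal_mono_right (support_scaleL_subset f y))
    (fun ij _ hij => ?_) |>.trans (Finset.sum_congr rfl fun ij hij => ?_)
  · simp_all [Finset.mem_antidiagonal]
  · rw [← (Finset.mem_antidiagonal.1 hij).2.2, hf, scaleL_coeff, scaleL_coeff]
    ring

def barR : LS →+* LS where
  toFun := barL
  map_one' := by
    ext k
    by_cases hk : k = 0 <;> simp [barL, scaleL_coeff, coeff_one, hk]
  map_mul' := scaleL_mul fun i j => zpow_add₀ (by norm_num) i j
  map_zero' := by ext k; simp [barL, scaleL_coeff]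
  map_add' x y := by ext k; simp [barL, scaleL_coeff, mul_add]

lemma barR_coeff (x : LS) (k : ℤ) : (barR x).coeff k = (-1 : ℂ) ^ k * x.coeff k := rfl

lemma barR_C (c : ℂ) : barR (C c) = C c := by
  ext k
  by_cases hk : k = 0 <;> simp [barR_coeff, hk, C_apply, coeff_single_of_ne]

lemma barR_hbarL : barR hbarL = -hbarL := by
  ext k
  by_cases hk : k = -1 <;> simp [barR_coeff, hbarL, hk, coeff_single_of_ne]

lemma barR_of_isConstH {x : LS} (hx : isConstH x) : barR x = x := by
  ext k
  by_cases hk : k = 0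
  · simp [barR_coeff, hk]
  · rw [barR_coeff, hx k hk, mul_zero]

def regSubring : Subring LS where
  carrier := {x | isRegH x}
  mul_mem' {x y} hx hy k hk := by
    rw [coeff_mul]
    refine Finset.sum_eq_zero fun ij hij => ?_
    obtain ⟨-, -, hij⟩ := Finset.mem_antidiagonal.1 hij
    rcases (by omega : ij.1 < 0 ∨ ij.2 < 0) with h | h
    · rw [hx _ h, zero_mul]
    · rw [hy _ h, mul_zero]
  one_mem' k hk := by simp [coeff_one, hk.ne]
  add_mem' hx hy k hk := by simp [hx k hk, hy k hk]
  zero_mem' _ _ := rfl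
  neg_mem' hx k hk := by simp [hx k hk]

lemma C_mem_regSubring (c : ℂ) : C c ∈ regSubring :=
  fun k hk => by rw [C_apply, coeff_single_of_ne hk.ne]

lemma barR_mem_regSubring {x : LS} (hx : x ∈ regSubring) : barR x ∈ regSubring :=
  fun k hk => by rw [barR_coeff, hx k hk, mul_zero]

lemma coeff_hbarL_mul (x : LS) (k : ℤ) : (hbarL * x).coeff k = x.coeff (k + 1) := by
  simpa [hbarL] using coeff_single_mul_add (r := (1 : ℂ)) (x := x) (a := k + 1) (b := -1)

lemma eq_zero_of_hbarL_smul_eq {m n : Type*} [Fintype m] [Fintype n]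
    {X : Matrix m n LS} (hX : ∀ i j, isRegH (X i j)) {c : ℕ} (hc : c ≠ 0)
    (A : Matrix n n ℂ) (A' : Matrix m m ℂ)
    (h : hbarL • c • X = X * (A.map C : Matrix n n LS) - (A'.map C : Matrix m m LS) * X) :
    X = 0 := by
  -- the coefficient of `ħ^{-k}` of `h` expresses `c • X_{k+1}` through `X_k`
  have step : ∀ k, X.map (coeff · k) = 0 → X.map (coeff · (k + 1)) = 0 := by
    intro k hk
    have hk' := congrArg (Matrix.map · (coeff · k)) h
    have hlhs : (hbarL • c • X).map (coeff · k) = c • X.map (coeff · (k + 1)) :=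
      Matrix.ext fun i j => by
        simp only [Matrix.map_apply, Matrix.smul_apply, smul_eq_mul, coeff_hbarL_mul, coeff_nsmul,
          Pi.smul_apply]
    rw [hlhs, Matrix.map_sub _ fun _ _ => coeff_sub, map_coeff_mul_map_C, map_coeff_map_C_mul, hk,
      Matrix.zero_mul, Matrix.mul_zero, sub_zero] at hk'
    exact Matrix.ext fun i j => by simpa [hc] using congrFun₂ hk' i j
  have base : X.map (coeff · (-1)) = 0 := Matrix.ext fun i j => hX i j (-1) (by norm_num)
  ext i j k
  rcases lt_or_ge k (-1) with hk | hk
  · exact hX i j k (by omega)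
  · exact congrFun₂ (Int.leInduction (motive := fun k _ => X.map (coeff · k) = 0) base
      (fun k _ => step k) k hk) i j

end Laurent

section PowerSeries

variable {r : ℕ}

def regAA (r : ℕ) : Subring (AA r) := (MvPowerSeries.map regSubring.subtype).range

lemma cA_mem_regAA (c : ℂ) : cA r c ∈ regAA r := by
  rw [regAA, MvPowerSeries.mem_range_map_subtype_iff]
  intro d
  rw [cA, RingHom.comp_apply, MvPowerSeries.coeff_C]
  split_ifs
  · exact C_mem_regSubring c
  · exact zero_mem _

def barAA (r : ℕ) : AA r →+* AA r := MvPowerSeries.map barR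

lemma barAA_mem_regAA {x : AA r} (hx : x ∈ regAA r) : barAA r x ∈ regAA r := by
  rw [regAA, MvPowerSeries.mem_range_map_subtype_iff] at hx ⊢
  exact fun d => barR_mem_regSubring (hx d)

lemma barAA_cA (c : ℂ) : barAA r (cA r c) = cA r c := by
  rw [cA, RingHom.comp_apply, barAA, MvPowerSeries.map_C, barR_C]

lemma barAA_hbarA : barAA r (hbarA r) = -hbarA r := by
  simp [barAA, hbarA, barR_hbarL]

lemma barAA_of_isConstH {x : AA r} (hx : ∀ d, isConstH (x d)) : barAA r x = x :=
  MvPowerSeries.ext fun d => barR_of_isConstH (hx d)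

lemma constantCoeff_barAA (x : AA r) : ccA (barAA r x) = barR (ccA x) :=
  MvPowerSeries.constantCoeff_map barR x

def thetaDer (a : Fin r) : Derivation LS (AA r) (AA r) :=
  Derivation.mk'
    { toFun := thetaA a
      map_add' x y := MvPowerSeries.ext fun d => mul_add (d a : LS) (x d) (y d)
      map_smul' c x := MvPowerSeries.ext fun d => mul_left_comm (d a : LS) c (x d) }
    fun x y => MvPowerSeries.ext fun d => by
      change (d a : LS) * MvPowerSeries.coeff d (x * y) =
        MvPowerSeries.coeff d (x * thetaA a y + y * thetaA a x)
      rw [mul_comm y, map_add, MvPowerSeries.coeff_mul, MvPowerSeries.coeff_mul,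
        MvPowerSeries.coeff_mul, Finset.mul_sum, ← Finset.sum_add_distrib]
      refine Finset.sum_congr rfl fun ef hef => ?_
      change (d a : LS) * (x ef.1 * y ef.2) =
        x ef.1 * ((ef.2 a : LS) * y ef.2) + (ef.1 a : LS) * x ef.1 * y ef.2
      rw [← Finset.HasAntidiagonal.mem_antidiagonal.1 hef, Finsupp.add_apply, Nat.cast_add]
      ring

def hbarThetaDer (a : Fin r) : Derivation LS (AA r) (AA r) := hbarA r • thetaDer a

lemma barAA_thetaA (a : Fin r) (x : AA r) : barAA r (thetaA a x) = thetaA a (barAA r x) :=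
  MvPowerSeries.ext fun d => by
    change barR ((d a : LS) * x d) = (d a : LS) * barR (x d)
    rw [map_mul, map_natCast]

end PowerSeries

section Matrices

variable {r n : ℕ}

lemma matRegH_iff_mem_matrix (M : Matrix (Fin n) (Fin n) (AA r)) :
    MatRegH M ↔ M ∈ (regAA r).matrix :=
  ⟨fun h i j => (MvPowerSeries.mem_range_map_subtype_iff _ _).2 (h i j),
    fun h i j => (MvPowerSeries.mem_range_map_subtype_iff _ _).1 (h i j)⟩

lemma map_cA_mem_matrix_regAA (B : Matrix (Fin n) (Fin n) ℂ) : B.map (cA r) ∈ (regAA r).matrix :=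
  fun i j => cA_mem_regAA (B i j)

lemma map_cA_eq_map_map (A : Matrix (Fin n) (Fin n) ℂ) :
    A.map (cA r) = (A.map HahnSeries.C).map MvPowerSeries.C :=
  (Matrix.map_map ..).symm

lemma hbarA_smul_thetaMat (a : Fin r) (M : Matrix (Fin n) (Fin n) (AA r)) :
    hbarA r • thetaMat a M = M.map (hbarThetaDer a) :=
  rfl

lemma map_hbarThetaDer_map_cA (a : Fin r) (B : Matrix (Fin n) (Fin n) ℂ) :
    (B.map (cA r)).map (hbarThetaDer a) = 0 :=
  Matrix.ext fun i j => (hbarThetaDer a).map_algebraMap (HahnSeries.C (B i j))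

lemma map_coeff_map_hbarThetaDer (a : Fin r) (d : Fin r →₀ ℕ)
    (Q : Matrix (Fin n) (Fin n) (AA r)) :
    (Q.map (hbarThetaDer a)).map (MvPowerSeries.coeff d) =
      hbarL • d a • Q.map (MvPowerSeries.coeff d) :=
  Matrix.ext fun i j => by
    change MvPowerSeries.coeff d (hbarA r * thetaA a (Q i j)) = hbarL * (d a • Q i j d)
    rw [hbarA, MvPowerSeries.coeff_C_mul, nsmul_eq_mul]
    rfl

lemma barMat_eq_mapMatrix (M : Matrix (Fin n) (Fin n) (AA r)) :
    barMat M = (barAA r).mapMatrix M :=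
  rfl

lemma barMat_mem_matrix_regAA {M : Matrix (Fin n) (Fin n) (AA r)} (hM : M ∈ (regAA r).matrix) :
    barMat M ∈ (regAA r).matrix :=
  fun i j => barAA_mem_regAA (hM i j)

lemma map_ccA_barMat (M : Matrix (Fin n) (Fin n) (AA r)) :
    (barMat M).map ccA = (M.map ccA).map barR :=
  Matrix.ext fun i j => constantCoeff_barAA (M i j)

lemma map_ccA_barMat_eq_one {S : Matrix (Fin n) (Fin n) (AA r)} (hS : S.map ccA = 1) :
    (barMat S).map ccA = 1 := by
  rw [map_ccA_barMat, hS, Matrix.map_one _ (map_zero barR) (map_one barR)]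

lemma map_ccA_transpose_mul_mul {T S : Matrix (Fin n) (Fin n) (AA r)} (hT : T.map ccA = 1)
    (hS : S.map ccA = 1) (M : Matrix (Fin n) (Fin n) (AA r)) :
    (Tᵀ * M * S).map ccA = M.map ccA := by
  rw [Matrix.map_mul, Matrix.map_mul, transpose_map, hT, hS, transpose_one, Matrix.one_mul,
    Matrix.mul_one]

lemma isUnit_of_map_ccA_eq_one {M : Matrix (Fin n) (Fin n) (AA r)} (hM : M.map ccA = 1) :
    IsUnit M :=
  MvPowerSeries.isUnit_of_isUnit_map_constantCoeff (hM ▸ isUnit_one)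

lemma barMat_thetaMat (a : Fin r) (M : Matrix (Fin n) (Fin n) (AA r)) :
    barMat (thetaMat a M) = thetaMat a (barMat M) :=
  Matrix.ext fun i j => barAA_thetaA a (M i j)

lemma barMat_hbarA_smul (M : Matrix (Fin n) (Fin n) (AA r)) :
    barMat (hbarA r • M) = -(hbarA r • barMat M) :=
  Matrix.ext fun i j => by
    simp only [barMat_eq_mapMatrix, RingHom.mapMatrix_apply, Matrix.map_apply, Matrix.smul_apply,
      Matrix.neg_apply, smul_eq_mul, map_mul, barAA_hbarA]
    ring

lemma barMat_map_cA (A : Matrix (Fin n) (Fin n) ℂ) : barMat (A.map (cA r)) = A.map (cA r) :=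
  Matrix.ext fun i j => barAA_cA (A i j)

lemma barMat_of_matConstH {M : Matrix (Fin n) (Fin n) (AA r)} (hM : MatConstH M) :
    barMat M = M :=
  Matrix.ext fun i j => barAA_of_isConstH (hM i j)

lemma hbarA_smul_thetaMat_barMat {a : Fin r} {Ω P S : Matrix (Fin n) (Fin n) (AA r)}
    (hΩ : barMat Ω = Ω) (hP : barMat P = P) (hS : hbarA r • thetaMat a S + Ω * S - S * P = 0) :
    hbarA r • thetaMat a (barMat S) = Ω * barMat S - barMat S * P := by
  have hbar := congrArg (barAA r).mapMatrix hS
  simp only [map_sub, map_add, map_mul, map_zero, ← barMat_eq_mapMatrix, barMat_hbarA_smul,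
    barMat_thetaMat, hΩ, hP] at hbar
  rw [← sub_eq_zero, ← neg_eq_zero, ← hbar]
  abel

lemma eq_zero_of_map_hbarThetaDer_eq {Q : Matrix (Fin n) (Fin n) (AA r)}
    (hQ : Q ∈ (regAA r).matrix) (hQ0 : Q.map ccA = 0) (A A' : Fin r → Matrix (Fin n) (Fin n) ℂ)
    (h : ∀ a, Q.map (hbarThetaDer a) = Q * (A a).map (cA r) - (A' a).map (cA r) * Q) :
    Q = 0 := by
  refine Matrix.ext fun i j => MvPowerSeries.ext fun d => ?_
  rcases eq_or_ne d 0 with rfl | hd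
  · exact congrFun₂ hQ0 i j
  obtain ⟨a, ha⟩ : ∃ a, d a ≠ 0 := by simpa [Finsupp.ne_iff] using hd
  suffices hX : Q.map (MvPowerSeries.coeff d) = 0 from congrFun₂ hX i j
  refine eq_zero_of_hbarL_smul_eq
    (fun i j => (MvPowerSeries.mem_range_map_subtype_iff _ _).1 (hQ i j) d) ha (A a) (A' a) ?_
  have hd := congrArg (Matrix.map · (MvPowerSeries.coeff d)) (h a)
  rwa [map_coeff_map_hbarThetaDer, Matrix.map_sub _ fun _ _ => map_sub _ _ _, map_cA_eq_map_map,
    map_cA_eq_map_map, MvPowerSeries.map_coeff_mul_map_C,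
    MvPowerSeries.map_coeff_map_C_mul] at hd

end Matrices

theorem unitarity_iff_selfadjoint_general {r n : ℕ}
    (Ω : Fin r → Matrix (Fin n) (Fin n) (AA r))
    (hconst : ∀ a, MatConstH (Ω a))
    (p : Fin r → Matrix (Fin n) (Fin n) ℂ)
    (B : Matrix (Fin n) (Fin n) ℂ)
    (hBp : ∀ (a : Fin r) (v w : Fin n → ℂ),
      dotProduct ((p a).mulVec v) (B.mulVec w) =
      dotProduct v (B.mulVec ((p a).mulVec w)))
    (S : Matrix (Fin n) (Fin n) (AA r))
    (hSreg : MatRegH S)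
    (hScc : S.map ccA = 1)
    (hSeq : ∀ a, hbarA r • thetaMat a S + Ω a * S - S * (p a).map (cA r) = 0) :
    (∀ (a : Fin r) (v w : Fin n → ℂ),
        dotProduct ((Ω a).mulVec (fun i => cA r (v i)))
          ((B.map (cA r)).mulVec (fun i => cA r (w i))) =
        dotProduct (fun i => cA r (v i))
          ((B.map (cA r)).mulVec ((Ω a).mulVec (fun i => cA r (w i))))) ↔
    (∀ v w : Fin n → ℂ,
        dotProduct ((barMat S).mulVec (fun i => cA r (v i)))
          ((B.map (cA r)).mulVec (S.mulVec (fun i => cA r (w i)))) =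
        cA r (dotProduct v (B.mulVec w))) := by
  have hpB : ∀ a, ((p a).map (cA r))ᵀ * B.map (cA r) = B.map (cA r) * (p a).map (cA r) := by
    intro a
    have hpB := (forall_mulVec_dotProduct_map_iff (RingHom.id ℂ) (p a) B).1 (hBp a)
    simpa only [Matrix.map_mul, transpose_map] using congrArg (Matrix.map · (cA r)) hpB
  have hS : ∀ a, S.map (hbarThetaDer a) = S * (p a).map (cA r) - Ω a * S := fun a => by
    rw [← hbarA_smul_thetaMat, ← sub_eq_zero, ← hSeq a]
    abel
  have hT : ∀ a, (barMat S).map (hbarThetaDer a) = Ω a * barMat S - barMat S * (p a).map (cA r) :=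
    fun a => hbarA_smul_thetaMat_barMat (barMat_of_matConstH (hconst a)) (barMat_map_cA _) (hSeq a)
  have hTcc := map_ccA_barMat_eq_one hScc
  rw [forall_mulVec_dotProduct_mulVec_map_iff]
  simp only [forall_mulVec_dotProduct_map_iff]
  constructor
  · intro hΩ
    refine sub_eq_zero.1 (eq_zero_of_map_hbarThetaDer_eq ?_ ?_ p (fun a => (p a)ᵀ) fun a => ?_)
    · rw [matRegH_iff_mem_matrix] at hSreg
      exact sub_mem (mul_mem (mul_mem (transpose_mem_matrix_iff.2 (barMat_mem_matrix_regAA hSreg))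
        (map_cA_mem_matrix_regAA B)) hSreg) (map_cA_mem_matrix_regAA B)
    · rw [Matrix.map_sub _ (map_sub ccA), map_ccA_transpose_mul_mul hTcc hScc, sub_self]
    · rw [transpose_map]
      exact (hbarThetaDer a).map_transpose_mul_mul_sub (map_hbarThetaDer_map_cA a B) (hS a) (hT a)
        (hΩ a) (hpB a)
  · exact fun hP a => (hbarThetaDer a).transpose_mul_eq_mul_of_transpose_mul_mul_eq
      (map_hbarThetaDer_map_cA a B) (hS a) (hT a) (hpB a) (isUnit_of_map_ccA_eq_one hScc)
      (isUnit_of_map_ccA_eq_one hTcc) hP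

/-- **Unitarity of `S` ⟺ self-adjointness of the connection matrices**
(equivalence (1) ⇔ (3) of the polynomiality Proposition; cf. the unitarity
Lemma for the quantum-cohomology `S`).  Let `Ω_a` be flat and independent of
`ħ`, `p_a = Ω_a|_{q=0}`, `B` a symmetric pairing with `B(p_a v, w) = B(v, p_a w)`,
and `S ∈ Mat_n(ℂ[[ħ⁻¹]][[q]])` the flat section with `S|_{q=0} = Id`.  Then
`B(Ω_a v, w) = B(v, Ω_a w)` for all `a, v, w` iff `B(S̄ v, S w) = B(v, w)`
for all `v, w`, where `S̄(q,ħ) = S(q,−ħ)`. -/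
theorem unitarity_iff_selfadjoint {r n : ℕ} (hr : 1 ≤ r) (hn : 1 ≤ n)
    (Ω : Fin r → Matrix (Fin n) (Fin n) (AA r))
    (hconst : ∀ a, MatConstH (Ω a))
    (hflat1 : ∀ a b, thetaMat a (Ω b) = thetaMat b (Ω a))
    (hflat2 : ∀ a b, Ω a * Ω b = Ω b * Ω a)
    (p : Fin r → Matrix (Fin n) (Fin n) ℂ)
    (hp : ∀ a i j, ccA (Ω a i j) = HahnSeries.C (p a i j))
    (B : Matrix (Fin n) (Fin n) ℂ)
    (hBsym : B.transpose = B)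
    (hBp : ∀ (a : Fin r) (v w : Fin n → ℂ),
      dotProduct ((p a).mulVec v) (B.mulVec w) =
      dotProduct v (B.mulVec ((p a).mulVec w)))
    (S : Matrix (Fin n) (Fin n) (AA r))
    (hSreg : MatRegH S)
    (hScc : S.map ccA = 1)
    (hSeq : ∀ a, hbarA r • thetaMat a S + Ω a * S - S * (p a).map (cA r) = 0) :
    (∀ (a : Fin r) (v w : Fin n → ℂ),
        dotProduct ((Ω a).mulVec (fun i => cA r (v i)))
          ((B.map (cA r)).mulVec (fun i => cA r (w i))) =
        dotProduct (fun i => cA r (v i))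
          ((B.map (cA r)).mulVec ((Ω a).mulVec (fun i => cA r (w i))))) ↔
    (∀ v w : Fin n → ℂ,
        dotProduct ((barMat S).mulVec (fun i => cA r (v i)))
          ((B.map (cA r)).mulVec (S.mulVec (fun i => cA r (w i)))) =
        cA r (dotProduct v (B.mulVec w))) :=
  unitarity_iff_selfadjoint_general Ω hconst p B hBp S hSreg hScc hSeq
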